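/- Under assumption (A1) and l1, l2, l3 > 0, the unique bounded fixed point W of the always-incentivize operator S is nonincreasing on [0,1]: q1 ≤ q2 implies W(q1) ≥ W(q2). -/
import Mathlib


/-- Probability of observation `y` under belief `q`, where `b1 = B_{1y}` and `b2 = B_{2y}`. -/
noncomputable def slSig (b1 b2 q : ℝ) : ℝ := b1 * (1 - q) + b2 * q

/-- Private (Bayesian posterior) belief after observation `y`. -/
noncomputable def slEta (b1 b2 q : ℝ) : ℝ := b2 * q / slSig b1 b2 q

/-- Incentive function `Δ_y(q) = l1 + l3 - (l1 + l2) η_y(q)`. -/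
noncomputable def slDelta (l1 l2 l3 b1 b2 q : ℝ) : ℝ := l1 + l3 - (l1 + l2) * slEta b1 b2 q

/-- The always-incentivize operator:
`(S W)(q) = Δ_2(q) − φ + ρ(σ_1(q) W(η_1(q)) + σ_2(q) W(η_2(q)))`. -/
noncomputable def slS (B11 B12 B21 B22 l1 l2 l3 φ ρ : ℝ) (W : ℝ → ℝ) (q : ℝ) : ℝ :=
  slDelta l1 l2 l3 B12 B22 q - φ +
    ρ * (slSig B11 B21 q * W (slEta B11 B21 q) + slSig B12 B22 q * W (slEta B12 B22 q))

lemma slSig_pos {b1 b2 q : ℝ} (hb1 : 0 < b1) (hb2 : 0 < b2) (hq0 : 0 ≤ q) (hq1 : q ≤ 1) :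
    0 < slSig b1 b2 q := by
  unfold slSig; rcases le_total b1 b2 with h|h <;> nlinarith

lemma slEta_nonneg {b1 b2 q : ℝ} (hb1 : 0 < b1) (hb2 : 0 < b2) (hq0 : 0 ≤ q) (hq1 : q ≤ 1) :
    0 ≤ slEta b1 b2 q :=
  div_nonneg (by positivity) (slSig_pos hb1 hb2 hq0 hq1).le

lemma slEta_le_one {b1 b2 q : ℝ} (hb1 : 0 < b1) (hb2 : 0 < b2) (hq0 : 0 ≤ q) (hq1 : q ≤ 1) :
    slEta b1 b2 q ≤ 1 := by
  rw [slEta, div_le_one (slSig_pos hb1 hb2 hq0 hq1)]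
  unfold slSig; nlinarith

lemma slEta_mono {b1 b2 q1 q2 : ℝ} (hb1 : 0 < b1) (hb2 : 0 < b2)
    (hq0 : 0 ≤ q1) (h12 : q1 ≤ q2) (hq1 : q2 ≤ 1) :
    slEta b1 b2 q1 ≤ slEta b1 b2 q2 := by
  rw [slEta, slEta, div_le_div_iff₀ (slSig_pos hb1 hb2 hq0 (h12.trans hq1))
    (slSig_pos hb1 hb2 (hq0.trans h12) hq1)]
  unfold slSig; nlinarith [mul_nonneg (mul_pos hb1 hb2).le (sub_nonneg.2 h12)]


set_option maxHeartbeats 1000000 in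
/-- under (A1) and `l1, l2, l3 > 0`, any bounded fixed point `W` of the
always-incentivize operator `S` is nonincreasing on `[0,1]`. -/
theorem stmt14
    (B11 B12 B21 B22 l1 l2 l3 φ ρ : ℝ)
    (hB11 : 0 < B11) (hB12 : 0 < B12) (hB21 : 0 < B21) (hB22 : 0 < B22)
    (hrow1 : B11 + B12 = 1) (hrow2 : B21 + B22 = 1)
    (hA1 : B11 * B22 - B12 * B21 ≥ 0)
    (hl1 : 0 < l1) (hl2 : 0 < l2) (hl3 : 0 < l3)
    (hφ0 : 0 < φ) (hφ1 : φ < 1) (hρ0 : 0 ≤ ρ) (hρ1 : ρ < 1)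
    (W : ℝ → ℝ)
    (hWbdd : ∃ M, ∀ q ∈ Set.Icc (0:ℝ) 1, |W q| ≤ M)
    (hWfix : ∀ q ∈ Set.Icc (0:ℝ) 1, W q = slS B11 B12 B21 B22 l1 l2 l3 φ ρ W q) :
    ∀ q1 q2 : ℝ, 0 ≤ q1 → q1 ≤ q2 → q2 ≤ 1 → W q2 ≤ W q1 := by
  obtain ⟨M, hM⟩ := hWbdd
  -- σ₁ + σ₂ = 1
  have hsum : ∀ q : ℝ, slSig B12 B22 q = 1 - slSig B11 B21 q := by
    intro q; unfold slSig; linear_combination (1 - q) * hrow1 + q * hrow2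
  -- η₁ ≤ η₂ under (A1)
  have heta12 : ∀ q : ℝ, 0 ≤ q → q ≤ 1 → slEta B11 B21 q ≤ slEta B12 B22 q := by
    intro q hq0 hq1
    rw [slEta, slEta, div_le_div_iff₀ (slSig_pos hB11 hB21 hq0 hq1)
      (slSig_pos hB12 hB22 hq0 hq1)]
    unfold slSig
    nlinarith [mul_nonneg (mul_nonneg hq0 (sub_nonneg.2 hq1)) hA1]
  -- σ₁ nonincreasing (B11 ≥ B21 from A1)
  have hB1121 : B21 ≤ B11 := by nlinarith
  have key : ∀ n : ℕ, ∀ q1 q2 : ℝ, 0 ≤ q1 → q1 ≤ q2 → q2 ≤ 1 →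
      W q2 - W q1 ≤ ρ ^ n * (2 * M) := by
    intro n
    induction n with
    | zero =>
      intro q1 q2 hq1 h12 hq2
      have h1 := hM q1 ⟨hq1, h12.trans hq2⟩
      have h2 := hM q2 ⟨hq1.trans h12, hq2⟩
      have := abs_le.1 h1
      have := abs_le.1 h2
      simp only [pow_zero, one_mul]
      linarith
    | succ n ih =>
      intro q1 q2 hq1 h12 hq2
      have hq1' : q1 ≤ 1 := h12.trans hq2
      have hq2' : 0 ≤ q2 := hq1.trans h12
      rw [hWfix q1 ⟨hq1, hq1'⟩, hWfix q2 ⟨hq2', hq2⟩]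
      set a1 := slEta B11 B21 q1 with ha1
      set a2 := slEta B12 B22 q1 with ha2
      set b1 := slEta B11 B21 q2 with hb1
      set b2 := slEta B12 B22 q2 with hb2
      set p := slSig B11 B21 q1 with hp
      set r := slSig B11 B21 q2 with hr
      -- membership facts
      have ha10 : 0 ≤ a1 := slEta_nonneg hB11 hB21 hq1 hq1'
      have ha20 : 0 ≤ a2 := slEta_nonneg hB12 hB22 hq1 hq1'
      have hb11 : b1 ≤ 1 := slEta_le_one hB11 hB21 hq2' hq2
      have hb21 : b2 ≤ 1 := slEta_le_one hB12 hB22 hq2' hq2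
      have ha1b1 : a1 ≤ b1 := slEta_mono hB11 hB21 hq1 h12 hq2
      have ha2b2 : a2 ≤ b2 := slEta_mono hB12 hB22 hq1 h12 hq2
      have ha12 : a1 ≤ a2 := heta12 q1 hq1 hq1'
      -- coefficient facts
      have hr0 : 0 < r := slSig_pos hB11 hB21 hq2' hq2
      have hp1 : p ≤ 1 := by
        have := slSig_pos hB12 hB22 hq1 hq1'
        rw [hsum q1] at this; linarith
      have hrp : r ≤ p := by
        rw [hp, hr]; unfold slSig
        nlinarith [mul_nonneg (sub_nonneg.2 hB1121) (sub_nonneg.2 h12)]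
      -- induction-hypothesis bounds
      set C := ρ ^ n * (2 * M) with hC
      have e1 : r * (W b1 - W a1) ≤ r * C :=
        mul_le_mul_of_nonneg_left (by linarith [ih a1 b1 ha10 ha1b1 hb11]) hr0.le
      have e2 : (p - r) * (W b2 - W a1) ≤ (p - r) * C :=
        mul_le_mul_of_nonneg_left
          (by linarith [ih a1 b2 ha10 (ha12.trans ha2b2) hb21]) (by linarith)
      have e3 : (1 - p) * (W b2 - W a2) ≤ (1 - p) * C :=
        mul_le_mul_of_nonneg_left (by linarith [ih a2 b2 ha20 ha2b2 hb21]) (by linarith)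
      have hf : r * W b1 + (1 - r) * W b2 - (p * W a1 + (1 - p) * W a2) ≤ C := by
        nlinarith [e1, e2, e3]
      -- Δ₂ monotone
      have hΔ : (l1 + l2) * a2 ≤ (l1 + l2) * b2 :=
        mul_le_mul_of_nonneg_left ha2b2 (by linarith)
      -- assemble
      unfold slS slDelta
      rw [hsum q1, hsum q2]
      rw [← ha1, ← ha2, ← hb1, ← hb2, ← hp, ← hr]
      have hmul : ρ * (r * W b1 + (1 - r) * W b2 - (p * W a1 + (1 - p) * W a2)) ≤ ρ * C :=
        mul_le_mul_of_nonneg_left hf hρ0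
      have hpow : ρ ^ (n + 1) * (2 * M) = ρ * C := by rw [hC]; ring
      rw [hpow]
      linarith [hmul, hΔ]
  intro q1 q2 hq1 h12 hq2
  have hlim : Filter.Tendsto (fun n : ℕ => ρ ^ n * (2 * M)) Filter.atTop (nhds 0) := by
    have := (tendsto_pow_atTop_nhds_zero_of_lt_one hρ0 hρ1).mul_const (2 * M)
    simpa using this
  have : W q2 - W q1 ≤ 0 :=
    ge_of_tendsto hlim (Filter.Eventually.of_forall fun n => key n q1 q2 hq1 h12 hq2)
  linarith
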